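/- arXiv:2502.03348 — 2 statements merged into one kernel-verified Lean document; each statement's English description precedes it below -/
import Mathlib

section
/- Let p be an odd prime and u = (x_1,...,x_p) ∈ Z_p^p with D^(p−1)(u) = u, where D is the Ducci map. Then all entries of u are equal: x_1 = x_2 = ... = x_p. -/
/-!
Write the Ducci map as `D = 1 + S`, with `S` the cyclic shift. In the endomorphism ring, which has
characteristic `p`, the binomial formula gives `D ^ p = 1 + S ^ p = 2`. Hence `D^[p-1] u = u` yields
`u + u = D^[p] u = D u = u + S u`, so `u` is invariant under the shift and therefore constant.
-/

def ducci {m n : ℕ} [NeZero n] (u : Fin n → ZMod m) : Fin n → ZMod m :=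
  fun i => u i + u (i + 1)

theorem Fin.apply_eq_apply_of_apply_add_one {α : Type*} {n : ℕ} [NeZero n] {f : Fin n → α}
    (hf : ∀ i, f (i + 1) = f i) (i j : Fin n) : f i = f j := by
  obtain ⟨k, rfl⟩ : ∃ k, n = k + 1 := Nat.exists_eq_succ_of_ne_zero (NeZero.ne n)
  suffices h : ∀ i, f i = f 0 by rw [h i, h j]
  refine Fin.induction rfl fun i ih => ?_
  rw [← Fin.coeSucc_eq_succ, hf, ih]

section CyclicShift

variable {m n : ℕ} [NeZero n]

def cyclicShift : Module.End (ZMod m) (Fin n → ZMod m) :=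
  LinearMap.funLeft (ZMod m) (ZMod m) (· + 1)

theorem cyclicShift_pow_apply (k : ℕ) (v : Fin n → ZMod m) :
    (cyclicShift ^ k) v = v ∘ (· + 1)^[k] := by
  induction k generalizing v with
  | zero => rfl
  | succ k ih => rw [pow_succ, Module.End.mul_apply, ih, Function.iterate_succ']; rfl

theorem cyclicShift_pow_self :
    (cyclicShift : Module.End (ZMod m) (Fin n → ZMod m)) ^ n = 1 := by
  refine LinearMap.ext fun v => ?_
  have hn : n • (1 : Fin n) = 0 := by simpa using card_nsmul_eq_zero (G := Fin n) (x := 1)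
  rw [cyclicShift_pow_apply, add_right_iterate, hn]
  simp only [add_zero]
  rfl

theorem ducci_eq_one_add_cyclicShift :
    (ducci : (Fin n → ZMod m) → Fin n → ZMod m) = ⇑(1 + cyclicShift) :=
  rfl

end CyclicShift

theorem ducci_iterate_prime (p : ℕ) [Fact p.Prime] (v : Fin p → ZMod p) :
    ducci^[p] v = v + v := by
  have : CharP (Module.End (ZMod p) (Fin p → ZMod p)) p :=
    charP_of_injective_algebraMap' (ZMod p) p
  rw [ducci_eq_one_add_cyclicShift, ← Module.End.coe_pow,
    add_pow_char_of_commute p (Commute.one_left _), one_pow, cyclicShift_pow_self]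
  rfl

theorem const_of_ducci_pow_pred_general (p : ℕ) [Fact p.Prime]
    (u : Fin p → ZMod p) (h : ducci^[p - 1] u = u) :
    ∀ i j : Fin p, u i = u j := by
  have hp : ducci^[p] u = ducci u := by
    have := congrArg ducci h
    rwa [← Function.iterate_succ_apply' ducci, Nat.succ_eq_add_one,
      Nat.sub_add_cancel (Fact.out : p.Prime).one_le] at this
  rw [ducci_iterate_prime] at hp
  exact Fin.apply_eq_apply_of_apply_add_one fun i => (add_left_cancel (congrFun hp i)).symm

theorem const_of_ducci_pow_pred (p : ℕ) [Fact p.Prime] (hodd : Odd p)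
    (u : Fin p → ZMod p) (h : ducci^[p - 1] u = u) :
    ∀ i j : Fin p, u i = u j :=
  const_of_ducci_pow_pred_general p u h
end

section
/- Let p be an odd prime and δ the multiplicative order of 2 mod p. Then the set of Ducci periods of tuples in Z_p^p is exactly {1, δ, p·δ}: Per(u) = 1 iff u = 0; Per(u) = δ iff u = (x,...,x) with x ≠ 0; and Per(u) = p·δ for all other u. -/
noncomputable def Per {m n : ℕ} [NeZero n] (u : Fin n → ZMod m) : ℕ :=
  sInf {β : ℕ | 0 < β ∧ ducci^[β] u = u}

/-!
Write the Ducci map as `D = 1 + S` with `S` the cyclic shift, and put `Δ = S - 1`, so that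
`D = 2 + Δ`. Over `ZMod p` on `p`-tuples, `Δ ^ p = S ^ p - 1 = 0` and `D ^ p = 1 + S ^ p = 2`.
Hence `D ^ (p * δ) = 2 ^ δ = 1` and every period divides `p * δ`.

If `D ^ k u = u` with `p ∤ k`, expand `(X + 2) ^ k - 1 = (2 ^ k - 1) + k 2 ^ (k - 1) X + X ^ 2 (…)`
and evaluate at `Δ`. When `2 ^ k ≠ 1`, `D ^ k - 1` is a unit plus a nilpotent, so `u = 0`; when
`2 ^ k = 1`, it is `Δ` times such an invertible operator, so `Δ u = 0`. Either way `u` is constant.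
So the period of a non-constant `u` is divisible by `p`, and also by `δ`, because
`D ^ (p * Per u) = 2 ^ Per u` fixes `u ≠ 0`; as `δ ∣ p - 1`, it is `p * δ`.
-/

open Function Polynomial

theorem Polynomial.isUnit_aeval_of_isNilpotent {R A : Type*} [CommRing R] [Ring A] [Algebra R A]
    {a : A} (ha : IsNilpotent a) {f : R[X]} (hf : IsUnit (f.coeff 0)) : IsUnit (aeval a f) := by
  obtain ⟨g, hg⟩ : X ∣ f - C (f.coeff 0) := by simp [X_dvd_iff]
  have hnil : IsNilpotent (a * aeval a g) := by
    refine Commute.isNilpotent_mul_right ?_ ha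
    simpa using (Commute.all X g).map (aeval a)
  rw [← sub_add_cancel f (C (f.coeff 0)), hg, map_add, map_mul, aeval_X, aeval_C]
  exact hnil.isUnit_add_right_of_commute (hf.map _) (Algebra.commutes _ _).symm

section General

variable {m n : ℕ} [NeZero n]

theorem Per_eq_minimalPeriod (u : Fin n → ZMod m) : Per u = minimalPeriod ducci u := by
  by_cases h : u ∈ periodicPts ducci
  · have hmem : minimalPeriod ducci u ∈ {β | 0 < β ∧ ducci^[β] u = u} :=
      ⟨minimalPeriod_pos_of_mem_periodicPts h, iterate_minimalPeriod⟩
    obtain ⟨hpos, hper⟩ := Nat.sInf_mem ⟨_, hmem⟩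
    exact le_antisymm (Nat.sInf_le hmem) (IsPeriodicPt.minimalPeriod_le hpos hper)
  · rw [minimalPeriod_eq_zero_of_notMem_periodicPts h, Per, Nat.sInf_eq_zero]
    exact Or.inr (Set.eq_empty_of_forall_notMem fun β hβ => h ⟨β, hβ⟩)

theorem Per_eq_one_iff (u : Fin n → ZMod m) : Per u = 1 ↔ u = 0 := by
  rw [Per_eq_minimalPeriod, minimalPeriod_eq_one_iff_isFixedPt, IsFixedPt]
  constructor
  · intro h
    funext i
    simpa [ducci] using congrFun h (i - 1)
  · rintro rfl
    funext i
    simp [ducci]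

theorem ducci_iterate_const (k : ℕ) (x : ZMod m) :
    ducci^[k] (fun _ : Fin n => x) = fun _ => 2 ^ k * x := by
  induction k with
  | zero => simp
  | succ k ih =>
    rw [iterate_succ_apply', ih]
    funext i
    simp only [ducci, pow_succ]
    ring

def shift : Module.End (ZMod m) (Fin n → ZMod m) :=
  LinearMap.funLeft (ZMod m) (ZMod m) (· + 1)

theorem shift_apply (u : Fin n → ZMod m) (i : Fin n) : shift u i = u (i + 1) := rfl

open Fin.NatCast in
theorem shift_pow_apply (k : ℕ) (u : Fin n → ZMod m) (i : Fin n) :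
    (shift ^ k) u i = u (i + k) := by
  induction k generalizing i with
  | zero => simp
  | succ k ih =>
    rw [pow_succ', Module.End.mul_apply, shift_apply, ih]
    push_cast
    ac_rfl

theorem shift_pow_self : (shift ^ n : Module.End (ZMod m) (Fin n → ZMod m)) = 1 := by
  ext u i
  simp [shift_pow_apply]

theorem eq_const_of_shift_apply_eq_self {u : Fin n → ZMod m} (h : shift u = u) :
    u = fun _ => u 0 := by
  funext i
  have := congrFun (iterate_fixed h i.val) 0
  rwa [← Module.End.coe_pow, shift_pow_apply, Fin.cast_val_eq_self, zero_add] at this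

theorem ducci_iterate_eq_pow (k : ℕ) :
    (ducci^[k] : (Fin n → ZMod m) → Fin n → ZMod m) =
      ⇑((1 + shift : Module.End (ZMod m) (Fin n → ZMod m)) ^ k) := by
  rw [Module.End.coe_pow]
  rfl

theorem aeval_shift_sub_one_apply (k : ℕ) (u : Fin n → ZMod m) :
    aeval (shift - 1 : Module.End (ZMod m) (Fin n → ZMod m)) ((X + C 2 : (ZMod m)[X]) ^ k - 1) u =
      ducci^[k] u - u := by
  have : shift - 1 + 2 = (1 + shift : Module.End (ZMod m) (Fin n → ZMod m)) := by
    rw [← one_add_one_eq_two]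
    abel
  rw [ducci_iterate_eq_pow, map_sub, map_pow, map_add, aeval_X, aeval_C, map_ofNat, this,
    map_one, LinearMap.sub_apply, Module.End.one_apply]

end General

section Prime

variable {p : ℕ} [Fact p.Prime]

local notation "Δ" => (shift - 1 : Module.End (ZMod p) (Fin p → ZMod p))

theorem isNilpotent_shift_sub_one : IsNilpotent Δ := by
  refine ⟨p, ?_⟩
  simpa [shift_pow_self] using congrArg (aeval (shift : Module.End (ZMod p) (Fin p → ZMod p)))
    (sub_pow_char (X : (ZMod p)[X]) 1)

theorem ducci_iterate_prime_mul (k : ℕ) (u : Fin p → ZMod p) :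
    ducci^[p * k] u = (2 : ZMod p) ^ k • u := by
  have hp : (1 + shift : Module.End (ZMod p) (Fin p → ZMod p)) ^ p = algebraMap (ZMod p) _ 2 := by
    simpa [shift_pow_self, one_add_one_eq_two, map_ofNat] using congrArg
      (aeval (shift : Module.End (ZMod p) (Fin p → ZMod p))) (add_pow_char (1 : (ZMod p)[X]) X p)
  rw [ducci_iterate_eq_pow, pow_mul, hp, ← map_pow, Module.algebraMap_end_apply]

theorem eq_zero_of_iterate_ducci_eq_self {k : ℕ} {u : Fin p → ZMod p}
    (h2 : (2 : ZMod p) ^ k ≠ 1) (hu : ducci^[k] u = u) : u = 0 := by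
  have hunit : IsUnit (aeval Δ ((X + C 2 : (ZMod p)[X]) ^ k - 1)) := by
    refine isUnit_aeval_of_isNilpotent isNilpotent_shift_sub_one ?_
    simpa [coeff_X_add_C_pow, sub_eq_zero] using h2
  refine ((Module.End.isUnit_iff _).mp hunit).1 ?_
  rw [aeval_shift_sub_one_apply, hu, sub_self, map_zero]

theorem shift_apply_eq_self_of_iterate_ducci_eq_self {k : ℕ} {u : Fin p → ZMod p}
    (hk : (k : ZMod p) ≠ 0) (h2 : (2 : ZMod p) ^ k = 1) (hu : ducci^[k] u = u) :
    shift u = u := by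
  obtain ⟨q, hq⟩ : X ∣ (X + C 2 : (ZMod p)[X]) ^ k - 1 := by
    simp [X_dvd_iff, coeff_X_add_C_pow, h2]
  have hq0 : q.coeff 0 = 2 ^ (k - 1) * k := by
    simpa [coeff_X_add_C_pow, coeff_one] using (congrArg (coeff · 1) hq).symm
  have hunit : IsUnit (aeval Δ q) := by
    refine isUnit_aeval_of_isNilpotent isNilpotent_shift_sub_one ?_
    rw [hq0]
    have h2unit : IsUnit (2 : ZMod p) := IsUnit.of_pow_eq_one h2 (by rintro rfl; simp at hk)
    exact (h2unit.pow _).mul hk.isUnit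
  suffices Δ u = 0 by rwa [LinearMap.sub_apply, sub_eq_zero] at this
  refine ((Module.End.isUnit_iff _).mp hunit).1 ?_
  have hfactor : aeval Δ ((X + C 2 : (ZMod p)[X]) ^ k - 1) = aeval Δ q * Δ := by
    rw [hq, mul_comm, map_mul, aeval_X]
  rw [map_zero, ← Module.End.mul_apply, ← hfactor, aeval_shift_sub_one_apply, hu, sub_self]

theorem exists_eq_const_of_iterate_ducci_eq_self {k : ℕ} {u : Fin p → ZMod p} (hk : ¬ p ∣ k)
    (hu : ducci^[k] u = u) : ∃ x, u = fun _ => x := by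
  by_cases h2 : (2 : ZMod p) ^ k = 1
  · have hk' : (k : ZMod p) ≠ 0 := by rwa [Ne, ZMod.natCast_eq_zero_iff]
    exact ⟨u 0, eq_const_of_shift_apply_eq_self
      (shift_apply_eq_self_of_iterate_ducci_eq_self hk' h2 hu)⟩
  · exact ⟨0, eq_zero_of_iterate_ducci_eq_self h2 hu⟩

theorem Per_const {n : ℕ} [NeZero n] {x : ZMod p} (hx : x ≠ 0) :
    Per (fun _ : Fin n => x) = orderOf (2 : ZMod p) := by
  rw [Per_eq_minimalPeriod, orderOf, minimalPeriod_eq_minimalPeriod_iff]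
  intro k
  rw [isPeriodicPt_mul_iff_pow_eq_one, IsPeriodicPt, IsFixedPt, ducci_iterate_const]
  exact const_inj.trans (mul_eq_right₀ hx)

theorem orderOf_two_dvd_sub_one (hp : p ≠ 2) : orderOf (2 : ZMod p) ∣ p - 1 :=
  ZMod.orderOf_dvd_card_sub_one (Ring.two_ne_zero (by rwa [ZMod.ringChar_zmod_n]))

theorem one_lt_orderOf_two (hp : p ≠ 2) : 1 < orderOf (2 : ZMod p) := by
  have hpos : 0 < orderOf (2 : ZMod p) :=
    Nat.pos_of_dvd_of_pos (orderOf_two_dvd_sub_one hp)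
      (Nat.sub_pos_of_lt (Fact.out : p.Prime).one_lt)
  have hne : orderOf (2 : ZMod p) ≠ 1 := by
    rw [Ne, orderOf_eq_one_iff]
    intro h
    rw [← one_add_one_eq_two, add_eq_right] at h
    exact one_ne_zero h
  omega

theorem coprime_orderOf_two (hp : p ≠ 2) : p.Coprime (orderOf (2 : ZMod p)) :=
  have hcop : p.Coprime (p - 1) :=
    (Nat.coprime_self_sub_right (Fact.out : p.Prime).one_lt.le).mpr (Nat.coprime_one_right p)
  hcop.coprime_dvd_right (orderOf_two_dvd_sub_one hp)

theorem Per_of_not_exists_const (hp : p ≠ 2) {u : Fin p → ZMod p}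
    (hu : ¬ ∃ x, u = fun _ => x) : Per u = p * orderOf (2 : ZMod p) := by
  have hper : IsPeriodicPt ducci (p * orderOf (2 : ZMod p)) u := by
    rw [IsPeriodicPt, IsFixedPt, ducci_iterate_prime_mul, pow_orderOf_eq_one, one_smul]
  have hu0 : u ≠ 0 := fun h => hu ⟨0, h⟩
  rw [Per_eq_minimalPeriod]
  refine Nat.dvd_antisymm hper.minimalPeriod_dvd
    ((coprime_orderOf_two hp).mul_dvd_of_dvd_of_dvd ?_ (orderOf_dvd_of_pow_eq_one ?_))
  · by_contra hdvd
    exact hu (exists_eq_const_of_iterate_ducci_eq_self hdvd iterate_minimalPeriod)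
  · have h := (isPeriodicPt_minimalPeriod ducci u).const_mul p
    rw [IsPeriodicPt, IsFixedPt, ducci_iterate_prime_mul] at h
    exact smul_left_injective (ZMod p) hu0 (h.trans (one_smul _ u).symm)

end Prime

theorem periods_Zpp (p : ℕ) [Fact p.Prime] (hodd : Odd p)
    (δ : ℕ) (hδ : δ = orderOf (2 : ZMod p)) :
    (∀ u : Fin p → ZMod p, Per u = 1 ∨ Per u = δ ∨ Per u = p * δ) ∧
    (∀ u : Fin p → ZMod p, Per u = 1 ↔ u = 0) ∧
    (∀ u : Fin p → ZMod p, Per u = δ ↔ ∃ x : ZMod p, x ≠ 0 ∧ u = fun _ => x) ∧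
    (∀ u : Fin p → ZMod p, (¬ ∃ x : ZMod p, u = fun _ => x) → Per u = p * δ) := by
  have hp : p ≠ 2 := hodd.ne_two_of_dvd_nat dvd_rfl
  have hδ1 : 1 < δ := hδ ▸ one_lt_orderOf_two hp
  have hδp : δ < p * δ := lt_mul_left (by omega) (Fact.out : p.Prime).one_lt
  have hcases : ∀ u : Fin p → ZMod p,
      u = 0 ∨ (∃ x, x ≠ 0 ∧ u = fun _ => x) ∨ ¬ ∃ x : ZMod p, u = fun _ => x := by
    intro u
    by_cases hc : ∃ x : ZMod p, u = fun _ => x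
    · obtain ⟨x, rfl⟩ := hc
      rcases eq_or_ne x 0 with rfl | hx
      · exact Or.inl rfl
      · exact Or.inr (Or.inl ⟨x, hx, rfl⟩)
    · exact Or.inr (Or.inr hc)
  subst hδ
  refine ⟨fun u => ?_, Per_eq_one_iff, fun u => ⟨fun h => ?_, ?_⟩,
    fun _ => Per_of_not_exists_const hp⟩
  · rcases hcases u with rfl | ⟨x, hx, rfl⟩ | hc
    · exact Or.inl ((Per_eq_one_iff _).2 rfl)
    · exact Or.inr (Or.inl (Per_const hx))
    · exact Or.inr (Or.inr (Per_of_not_exists_const hp hc))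
  · rcases hcases u with rfl | hx | hc
    · rw [(Per_eq_one_iff _).2 rfl] at h
      omega
    · exact hx
    · rw [Per_of_not_exists_const hp hc] at h
      omega
  · rintro ⟨x, hx, rfl⟩
    exact Per_const hx
end
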